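/- For a Gaussian mixture density g = Σ_{i∈[n]} c_i γ_i (with c_i ≥ 0 summing to 1, γ_i the density of N(μ_i, β²I_d)), the differential entropy satisfies h(g) ≥ (d/2)log(4πβ²) − Σ_i c_i log(Σ_j c_j exp(−‖μ_i − μ_j‖²/(4β²))). -/

import Mathlib

open MeasureTheory Real

/-- The density of the Gaussian `N(μ, β²I_d)` on `ℝ^d`. -/
noncomputable def gaussPdf {d : ℕ} (β : ℝ) (μ t : EuclideanSpace ℝ (Fin d)) : ℝ :=
  (2 * π * β ^ 2) ^ (-(d : ℝ) / 2) * Real.exp (-‖t - μ‖ ^ 2 / (2 * β ^ 2))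

/-- Differential entropy `h(g) = −∫ g log g` of a density on `ℝ^d`. -/
noncomputable def diffEnt {d : ℕ} (g : EuclideanSpace ℝ (Fin d) → ℝ) : ℝ :=
  -∫ t, g t * Real.log (g t)

/-! Since `h(g) = -∑ᵢ cᵢ ∫ γᵢ log g`, it suffices to bound each `∫ γᵢ log g` from above.
Jensen's inequality for the concave `log` under the probability density `γᵢ` gives
`∫ γᵢ log g ≤ log ∫ γᵢ g = log ∑ⱼ cⱼ ∫ γᵢ γⱼ`, and by the parallelogram law `γᵢ γⱼ` is
`(2πβ²)^{-d} exp(-‖μᵢ - μⱼ‖²/(4β²))` times a Gaussian of variance `β²/2` centred at the midpoint,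
so `∫ γᵢ γⱼ = (4πβ²)^{-d/2} exp(-‖μᵢ - μⱼ‖²/(4β²))`. -/

theorem integral_mul_log_le_log_integral_mul {α : Type*} [MeasurableSpace α] {ν : Measure α}
    {p f : α → ℝ} (hp : 0 ≤ᵐ[ν] p) (hp_one : ∫ x, p x ∂ν = 1) (hf : ∀ᵐ x ∂ν, 0 < f x)
    (hpf : Integrable (fun x => p x * f x) ν) (hplog : Integrable (fun x => p x * log (f x)) ν)
    (hpf_pos : 0 < ∫ x, p x * f x ∂ν) :
    ∫ x, p x * log (f x) ∂ν ≤ log (∫ x, p x * f x ∂ν) := by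
  set A := ∫ x, p x * f x ∂ν
  have hp_int : Integrable p ν := integrable_of_integral_eq_one hp_one
  -- `log` lies below its tangent line at `A`
  have htangent : ∀ᵐ x ∂ν, p x * log (f x) ≤ A⁻¹ * (p x * f x) + (log A - 1) * p x := by
    filter_upwards [hp, hf] with x hpx hfx
    have hlog := log_le_sub_one_of_pos (div_pos hfx hpf_pos)
    rw [log_div hfx.ne' hpf_pos.ne'] at hlog
    calc p x * log (f x) ≤ p x * (f x / A - 1 + log A) := by gcongr; linarith
      _ = A⁻¹ * (p x * f x) + (log A - 1) * p x := by ring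
  calc ∫ x, p x * log (f x) ∂ν
      ≤ ∫ x, A⁻¹ * (p x * f x) + (log A - 1) * p x ∂ν :=
        integral_mono_ae hplog ((hpf.const_mul _).add (hp_int.const_mul _)) htangent
    _ = log A := by
        rw [integral_add (hpf.const_mul _) (hp_int.const_mul _), integral_const_mul,
          integral_const_mul, hp_one, inv_mul_cancel₀ hpf_pos.ne']
        ring

theorem mul_exp_neg_mul_le {b : ℝ} (hb : 0 < b) (x : ℝ) :
    x * exp (-b * x) ≤ 2 / b * exp (-(b / 2) * x) := by
  have hx : x ≤ 2 / b * exp (b / 2 * x) := by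
    have := add_one_le_exp (b / 2 * x)
    rw [div_mul_eq_mul_div, le_div_iff₀ hb]
    nlinarith [exp_pos (b / 2 * x)]
  calc x * exp (-b * x) ≤ 2 / b * exp (b / 2 * x) * exp (-b * x) := by gcongr
    _ = 2 / b * exp (-(b / 2) * x) := by rw [mul_assoc, ← exp_add]; ring_nf

section GaussianIntegral

variable {V : Type*} [NormedAddCommGroup V] [InnerProductSpace ℝ V] [FiniteDimensional ℝ V]
  [MeasurableSpace V] [BorelSpace V] {b : ℝ}

theorem integral_exp_neg_mul_sq_norm_sub (hb : 0 < b) (m : V) :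
    ∫ v, exp (-b * ‖v - m‖ ^ 2) = (π / b) ^ (Module.finrank ℝ V / 2 : ℝ) := by
  rw [integral_sub_right_eq_self (fun v => exp (-b * ‖v‖ ^ 2)) m,
    GaussianFourier.integral_rexp_neg_mul_sq_norm hb]

theorem integrable_exp_neg_mul_sq_norm_sub (hb : 0 < b) (m : V) :
    Integrable (fun v => exp (-b * ‖v - m‖ ^ 2)) :=
  .of_integral_ne_zero (by rw [integral_exp_neg_mul_sq_norm_sub hb]; positivity)

theorem integrable_sq_norm_sub_mul_exp_neg_mul_sq_norm_sub (hb : 0 < b) (m : V) :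
    Integrable (fun v => ‖v - m‖ ^ 2 * exp (-b * ‖v - m‖ ^ 2)) := by
  refine ((integrable_exp_neg_mul_sq_norm_sub (half_pos hb) m).const_mul (2 / b)).mono'
    (by fun_prop) (ae_of_all _ fun v => ?_)
  rw [norm_of_nonneg (by positivity)]
  exact mul_exp_neg_mul_le hb _

end GaussianIntegral

section GaussPdf

variable {d : ℕ} {β : ℝ}

theorem gaussPdf_eq_mul_exp (β : ℝ) (μ t : EuclideanSpace ℝ (Fin d)) :
    gaussPdf β μ t = (2 * π * β ^ 2) ^ (-(d : ℝ) / 2) * exp (-(2 * β ^ 2)⁻¹ * ‖t - μ‖ ^ 2) := by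
  unfold gaussPdf
  congr 2
  ring

theorem gaussPdf_pos (hβ : β ≠ 0) (μ t : EuclideanSpace ℝ (Fin d)) : 0 < gaussPdf β μ t := by
  unfold gaussPdf
  positivity

theorem gaussPdf_nonneg (β : ℝ) (μ t : EuclideanSpace ℝ (Fin d)) : 0 ≤ gaussPdf β μ t := by
  unfold gaussPdf
  positivity

theorem gaussPdf_le (β : ℝ) (μ t : EuclideanSpace ℝ (Fin d)) :
    gaussPdf β μ t ≤ (2 * π * β ^ 2) ^ (-(d : ℝ) / 2) := by
  refine mul_le_of_le_one_right (by positivity) (exp_le_one_iff.2 ?_)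
  exact div_nonpos_of_nonpos_of_nonneg (neg_nonpos.2 (by positivity)) (by positivity)

theorem continuous_gaussPdf (β : ℝ) (μ : EuclideanSpace ℝ (Fin d)) : Continuous (gaussPdf β μ) := by
  unfold gaussPdf
  fun_prop

theorem log_gaussPdf (hβ : β ≠ 0) (μ t : EuclideanSpace ℝ (Fin d)) :
    log (gaussPdf β μ t) = log ((2 * π * β ^ 2) ^ (-(d : ℝ) / 2)) - ‖t - μ‖ ^ 2 / (2 * β ^ 2) := by
  rw [gaussPdf, log_mul (by positivity) (exp_pos _).ne', log_exp]
  ring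

theorem integral_gaussPdf (hβ : β ≠ 0) (μ : EuclideanSpace ℝ (Fin d)) :
    ∫ t, gaussPdf β μ t = 1 := by
  simp_rw [gaussPdf_eq_mul_exp, integral_const_mul]
  rw [integral_exp_neg_mul_sq_norm_sub (by positivity), finrank_euclideanSpace_fin,
    show π / (2 * β ^ 2)⁻¹ = 2 * π * β ^ 2 by field_simp, ← rpow_add (by positivity),
    neg_div, neg_add_cancel, rpow_zero]

theorem integrable_gaussPdf (hβ : β ≠ 0) (μ : EuclideanSpace ℝ (Fin d)) :
    Integrable (gaussPdf β μ) :=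
  integrable_of_integral_eq_one (integral_gaussPdf hβ μ)

theorem integrable_gaussPdf_mul_sq_norm_sub (hβ : β ≠ 0) (μ : EuclideanSpace ℝ (Fin d)) :
    Integrable (fun t => gaussPdf β μ t * ‖t - μ‖ ^ 2) := by
  refine ((integrable_sq_norm_sub_mul_exp_neg_mul_sq_norm_sub (b := (2 * β ^ 2)⁻¹)
    (by positivity) μ).const_mul ((2 * π * β ^ 2) ^ (-(d : ℝ) / 2))).congr
    (ae_of_all _ fun t => ?_)
  simp only [gaussPdf_eq_mul_exp]
  ring

theorem gaussPdf_mul_gaussPdf (β : ℝ) (p q t : EuclideanSpace ℝ (Fin d)) :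
    gaussPdf β p t * gaussPdf β q t =
      (2 * π * β ^ 2) ^ (-(d : ℝ) / 2) * (2 * π * β ^ 2) ^ (-(d : ℝ) / 2) *
        exp (-‖p - q‖ ^ 2 / (4 * β ^ 2)) *
          exp (-(β ^ 2)⁻¹ * ‖t - (2⁻¹ : ℝ) • (p + q)‖ ^ 2) := by
  have hpar := parallelogram_law_with_norm ℝ (t - p) (t - q)
  rw [show t - p + (t - q) = (2 : ℝ) • (t - (2⁻¹ : ℝ) • (p + q)) by module,
    show t - p - (t - q) = -(p - q) by abel, norm_neg, norm_smul, mul_pow] at hpar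
  rw [gaussPdf, gaussPdf, mul_mul_mul_comm, mul_assoc (_ * _) (exp _), ← exp_add, ← exp_add]
  congr 2
  by_cases hβ : β = 0
  · simp [hβ]
  rw [Real.norm_ofNat] at hpar
  generalize ‖t - (2⁻¹ : ℝ) • (p + q)‖ ^ 2 = C at hpar ⊢
  field_simp
  linear_combination 2 * hpar

theorem integral_gaussPdf_mul_gaussPdf (hβ : β ≠ 0) (p q : EuclideanSpace ℝ (Fin d)) :
    ∫ t, gaussPdf β p t * gaussPdf β q t =
      (4 * π * β ^ 2) ^ (-(d : ℝ) / 2) * exp (-‖p - q‖ ^ 2 / (4 * β ^ 2)) := by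
  simp_rw [gaussPdf_mul_gaussPdf, integral_const_mul]
  rw [integral_exp_neg_mul_sq_norm_sub (by positivity), finrank_euclideanSpace_fin,
    show π / (β ^ 2)⁻¹ = π * β ^ 2 by field_simp,
    show 4 * π * β ^ 2 = 2 * (2 * (π * β ^ 2)) by ring,
    show 2 * π * β ^ 2 = 2 * (π * β ^ 2) by ring, neg_div]
  simp (disch := positivity) only [mul_rpow, rpow_neg]
  field_simp

theorem integrable_gaussPdf_mul_gaussPdf (hβ : β ≠ 0) (p q : EuclideanSpace ℝ (Fin d)) :
    Integrable (fun t => gaussPdf β p t * gaussPdf β q t) :=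
  .of_integral_ne_zero (by rw [integral_gaussPdf_mul_gaussPdf hβ]; positivity)

end GaussPdf

noncomputable def gaussMixture {d : ℕ} {ι : Type*} [Fintype ι] (β : ℝ) (c : ι → ℝ)
    (μ : ι → EuclideanSpace ℝ (Fin d)) (t : EuclideanSpace ℝ (Fin d)) : ℝ :=
  ∑ i, c i * gaussPdf β (μ i) t

section GaussMixture

variable {d : ℕ} {ι : Type*} [Fintype ι] {β : ℝ} {c : ι → ℝ} {μ : ι → EuclideanSpace ℝ (Fin d)}

theorem continuous_gaussMixture : Continuous (gaussMixture β c μ) :=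
  continuous_finsetSum _ fun i _ => continuous_const.mul (continuous_gaussPdf β (μ i))

theorem mul_gaussPdf_le_gaussMixture (hc : ∀ i, 0 ≤ c i) (i : ι) (t : EuclideanSpace ℝ (Fin d)) :
    c i * gaussPdf β (μ i) t ≤ gaussMixture β c μ t :=
  Finset.single_le_sum (f := fun j => c j * gaussPdf β (μ j) t)
    (fun j _ => mul_nonneg (hc j) (gaussPdf_nonneg β (μ j) t)) (Finset.mem_univ i)

theorem gaussMixture_pos (hβ : β ≠ 0) (hc : ∀ i, 0 ≤ c i) {k : ι} (hk : 0 < c k)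
    (t : EuclideanSpace ℝ (Fin d)) : 0 < gaussMixture β c μ t :=
  (mul_pos hk (gaussPdf_pos hβ (μ k) t)).trans_le (mul_gaussPdf_le_gaussMixture hc k t)

theorem gaussMixture_le (hc : ∀ i, 0 ≤ c i) (hsum : ∑ i, c i = 1) (t : EuclideanSpace ℝ (Fin d)) :
    gaussMixture β c μ t ≤ (2 * π * β ^ 2) ^ (-(d : ℝ) / 2) :=
  calc gaussMixture β c μ t ≤ ∑ i, c i * (2 * π * β ^ 2) ^ (-(d : ℝ) / 2) :=
        Finset.sum_le_sum fun i _ => mul_le_mul_of_nonneg_left (gaussPdf_le β (μ i) t) (hc i)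
    _ = (2 * π * β ^ 2) ^ (-(d : ℝ) / 2) := by rw [← Finset.sum_mul, hsum, one_mul]

theorem gaussPdf_mul_gaussMixture (m t : EuclideanSpace ℝ (Fin d)) :
    gaussPdf β m t * gaussMixture β c μ t = ∑ j, c j * (gaussPdf β m t * gaussPdf β (μ j) t) := by
  rw [gaussMixture, Finset.mul_sum]
  exact Finset.sum_congr rfl fun j _ => mul_left_comm _ _ _

theorem integrable_gaussPdf_mul_gaussMixture (hβ : β ≠ 0) (m : EuclideanSpace ℝ (Fin d)) :
    Integrable (fun t => gaussPdf β m t * gaussMixture β c μ t) := by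
  simp_rw [gaussPdf_mul_gaussMixture]
  exact integrable_finsetSum _ fun j _ => (integrable_gaussPdf_mul_gaussPdf hβ _ _).const_mul _

theorem integral_gaussPdf_mul_gaussMixture (hβ : β ≠ 0) (m : EuclideanSpace ℝ (Fin d)) :
    ∫ t, gaussPdf β m t * gaussMixture β c μ t =
      (4 * π * β ^ 2) ^ (-(d : ℝ) / 2) * ∑ j, c j * exp (-‖m - μ j‖ ^ 2 / (4 * β ^ 2)) := by
  simp_rw [gaussPdf_mul_gaussMixture]
  rw [integral_finsetSum _ fun j _ => (integrable_gaussPdf_mul_gaussPdf hβ _ _).const_mul _,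
    Finset.mul_sum]
  simp_rw [integral_const_mul, integral_gaussPdf_mul_gaussPdf hβ, mul_left_comm]

-- `log g` is squeezed between `log (c i γ_i)`, quadratic in `t`, and the constant `log M`.
theorem integrable_gaussPdf_mul_log_gaussMixture (hβ : β ≠ 0) (hc : ∀ i, 0 ≤ c i)
    (hsum : ∑ i, c i = 1) {i : ι} (hi : 0 < c i) :
    Integrable (fun t => gaussPdf β (μ i) t * log (gaussMixture β c μ t)) := by
  set M := (2 * π * β ^ 2) ^ (-(d : ℝ) / 2)
  set C := |log (c i)| + |log M|
  have hbound : ∀ t, |log (gaussMixture β c μ t)| ≤ C + (2 * β ^ 2)⁻¹ * ‖t - μ i‖ ^ 2 := by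
    intro t
    have hlow := log_le_log (mul_pos hi (gaussPdf_pos hβ (μ i) t))
      (mul_gaussPdf_le_gaussMixture hc i t)
    have hup := log_le_log (gaussMixture_pos (μ := μ) hβ hc hi t) (gaussMixture_le hc hsum t)
    rw [log_mul hi.ne' (gaussPdf_pos hβ (μ i) t).ne', log_gaussPdf hβ] at hlow
    have hq : 0 ≤ ‖t - μ i‖ ^ 2 / (2 * β ^ 2) := by positivity
    rw [abs_le, inv_mul_eq_div]
    constructor <;> linarith [neg_abs_le (log (c i)), neg_abs_le (log M), le_abs_self (log M),
      abs_nonneg (log (c i))]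
  refine (((integrable_gaussPdf hβ (μ i)).mul_const C).add
    ((integrable_gaussPdf_mul_sq_norm_sub hβ (μ i)).const_mul (2 * β ^ 2)⁻¹)).mono'
    ((continuous_gaussPdf β (μ i)).measurable.mul
      continuous_gaussMixture.measurable.log).aestronglyMeasurable (ae_of_all _ fun t => ?_)
  rw [norm_mul, norm_of_nonneg (gaussPdf_nonneg β (μ i) t), Real.norm_eq_abs]
  calc gaussPdf β (μ i) t * |log (gaussMixture β c μ t)|
      ≤ gaussPdf β (μ i) t * (C + (2 * β ^ 2)⁻¹ * ‖t - μ i‖ ^ 2) := by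
        gcongr
        · exact gaussPdf_nonneg β (μ i) t
        · exact hbound t
    _ = gaussPdf β (μ i) t * C + (2 * β ^ 2)⁻¹ * (gaussPdf β (μ i) t * ‖t - μ i‖ ^ 2) := by ring

theorem integral_gaussMixture_mul_log (hβ : β ≠ 0) (hc : ∀ i, 0 ≤ c i) (hsum : ∑ i, c i = 1) :
    ∫ t, gaussMixture β c μ t * log (gaussMixture β c μ t) =
      ∑ i, c i * ∫ t, gaussPdf β (μ i) t * log (gaussMixture β c μ t) := by
  have hint : ∀ i,
      Integrable (fun t => c i * (gaussPdf β (μ i) t * log (gaussMixture β c μ t))) := by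
    intro i
    rcases (hc i).eq_or_lt with h | h
    · simp [← h]
    · exact (integrable_gaussPdf_mul_log_gaussMixture hβ hc hsum h).const_mul _
  have hsplit : ∀ t, gaussMixture β c μ t * log (gaussMixture β c μ t) =
      ∑ i, c i * (gaussPdf β (μ i) t * log (gaussMixture β c μ t)) := by
    intro t
    generalize log (gaussMixture β c μ t) = L
    rw [gaussMixture, Finset.sum_mul]
    simp_rw [mul_assoc]
  simp_rw [hsplit]
  rw [integral_finsetSum _ fun i _ => hint i]
  simp_rw [integral_const_mul]

theorem integral_gaussPdf_mul_log_gaussMixture_le (hβ : β ≠ 0) (hc : ∀ i, 0 ≤ c i)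
    (hsum : ∑ i, c i = 1) {i : ι} (hi : 0 < c i) :
    ∫ t, gaussPdf β (μ i) t * log (gaussMixture β c μ t) ≤
      -((d : ℝ) / 2) * log (4 * π * β ^ 2) +
        log (∑ j, c j * exp (-‖μ i - μ j‖ ^ 2 / (4 * β ^ 2))) := by
  have hS : 0 < ∑ j, c j * exp (-‖μ i - μ j‖ ^ 2 / (4 * β ^ 2)) :=
    Finset.sum_pos' (fun j _ => mul_nonneg (hc j) (exp_pos _).le)
      ⟨i, Finset.mem_univ i, mul_pos hi (exp_pos _)⟩
  have hjensen := integral_mul_log_le_log_integral_mul (ae_of_all _ (gaussPdf_nonneg β (μ i)))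
    (integral_gaussPdf hβ (μ i)) (ae_of_all _ (gaussMixture_pos hβ hc hi))
    (integrable_gaussPdf_mul_gaussMixture hβ (μ i))
    (integrable_gaussPdf_mul_log_gaussMixture hβ hc hsum hi)
    (by rw [integral_gaussPdf_mul_gaussMixture hβ]; positivity)
  rwa [integral_gaussPdf_mul_gaussMixture hβ, log_mul (by positivity) hS.ne',
    log_rpow (by positivity), neg_div] at hjensen

end GaussMixture

/-- Jensen lower bound of Huber et al. on the differential entropy of a Gaussian mixture:
`h(g) ≥ (d/2)log(4πβ²) − Σ_i c_i log(Σ_j c_j exp(−‖μ_i − μ_j‖²/(4β²)))`. -/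
theorem diffEnt_mixture_ge_jensen {d n : ℕ} (β : ℝ) (hβ : 0 < β)
    (c : Fin n → ℝ) (hc : ∀ i, 0 ≤ c i) (hsum : ∑ i, c i = 1)
    (μ : Fin n → EuclideanSpace ℝ (Fin d)) :
    diffEnt (fun t => ∑ i, c i * gaussPdf β (μ i) t) ≥
      (d : ℝ) / 2 * Real.log (4 * π * β ^ 2) -
        ∑ i, c i * Real.log (∑ j, c j * Real.exp (-‖μ i - μ j‖ ^ 2 / (4 * β ^ 2))) := by
  have hterm : ∀ i, c i * ∫ t, gaussPdf β (μ i) t * log (gaussMixture β c μ t) ≤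
      c i * (-((d : ℝ) / 2) * log (4 * π * β ^ 2) +
        log (∑ j, c j * exp (-‖μ i - μ j‖ ^ 2 / (4 * β ^ 2)))) := by
    intro i
    rcases (hc i).eq_or_lt with h | h
    · simp [← h]
    · exact mul_le_mul_of_nonneg_left
        (integral_gaussPdf_mul_log_gaussMixture_le hβ.ne' hc hsum h) h.le
  calc diffEnt (gaussMixture β c μ)
      = -∑ i, c i * ∫ t, gaussPdf β (μ i) t * log (gaussMixture β c μ t) := by
        rw [diffEnt, integral_gaussMixture_mul_log hβ.ne' hc hsum]
    _ ≥ -∑ i, c i * (-((d : ℝ) / 2) * log (4 * π * β ^ 2) +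
          log (∑ j, c j * exp (-‖μ i - μ j‖ ^ 2 / (4 * β ^ 2)))) :=
        neg_le_neg (Finset.sum_le_sum fun i _ => hterm i)
    _ = _ := by
        simp only [mul_add, Finset.sum_add_distrib, ← Finset.sum_mul, hsum]
        ring
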